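/- arXiv:1801.00981 — 6 statements merged into one kernel-verified Lean document; each statement's English description precedes it below -/
import Mathlib

section
/- Let (Z₁, Z₂) be a max-mixture pair with mixing coefficient a ∈ (0,1) and extremal coefficients θ_X, θ_Y ∈ [1,2], and let λ > 0. Then the F^λ-madogram ν_{F^λ} := (1/2)·E[ |F(Z₁)^λ − F(Z₂)^λ| ] satisfies ν_{F^λ} = λ/(1+λ) − 2λ/(a(θ_X−1)+1+λ) + λ/(aθ_X+λ) − (λ θ_Y/((1−a)θ_Y + aθ_X + λ))·B((aθ_X+λ)/(1−a), θ_Y). -/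
open MeasureTheory Real Filter

/-- The unit Fréchet distribution function: `F(z) = exp(-1/z)` for `z > 0`, `0` otherwise. -/
noncomputable def frechetCDF (z : ℝ) : ℝ := if 0 < z then Real.exp (-1 / z) else 0

/-- The Beta function `B(x,y) = ∫₀¹ t^(x-1) (1-t)^(y-1) dt`. -/
noncomputable def Beta (x y : ℝ) : ℝ := ∫ t in (0:ℝ)..1, t ^ (x - 1) * (1 - t) ^ (y - 1)

open Set

lemma frechetCDF_nonneg (z : ℝ) : 0 ≤ frechetCDF z := by
  unfold frechetCDF; split <;> positivity

lemma frechetCDF_lt_one (z : ℝ) : frechetCDF z < 1 := by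
  unfold frechetCDF; split
  · rw [Real.exp_lt_one_iff]
    have : (0:ℝ) < z := by assumption
    rw [neg_div]; simp [div_pos, this]
  · norm_num

lemma frechetCDF_mono : Monotone frechetCDF := by
  intro z1 z2 h
  unfold frechetCDF
  split
  · have h1 : (0:ℝ) < z1 := by assumption
    have h2 : (0:ℝ) < z2 := lt_of_lt_of_le h1 h
    rw [if_pos h2]
    apply Real.exp_le_exp.2
    rw [neg_div, neg_div, neg_le_neg_iff]
    exact one_div_le_one_div_of_le h1 h
  · split
    · positivity
    · exact le_refl 0

lemma w_pos {s : ℝ} (hs0 : 0 < s) (hs1 : s < 1) : 0 < -1 / Real.log s := by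
  have h := Real.log_neg hs0 hs1
  rw [show (-1 : ℝ)/Real.log s = 1/(-Real.log s) by rw [div_neg, neg_div]]
  exact div_pos one_pos (by linarith)

lemma frechetCDF_eval {s : ℝ} (hs0 : 0 < s) (hs1 : s < 1) :
    frechetCDF (-1 / Real.log s) = s := by
  have hl := Real.log_neg hs0 hs1
  rw [frechetCDF, if_pos (w_pos hs0 hs1)]
  rw [show -1 / (-1 / Real.log s) = Real.log s by field_simp]
  exact Real.exp_log hs0

lemma frechetCDF_le_iff {s : ℝ} (hs0 : 0 < s) (hs1 : s < 1) (z : ℝ) :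
    frechetCDF z ≤ s ↔ z ≤ -1 / Real.log s := by
  have hl := Real.log_neg hs0 hs1
  have hL : (0:ℝ) < -Real.log s := by linarith
  have hw := w_pos hs0 hs1
  rw [frechetCDF]
  split
  · rename_i hz
    rw [← Real.le_log_iff_exp_le hs0]
    rw [show (-1 : ℝ)/z = -(1/z) by ring, neg_le,
      show (-1 : ℝ)/Real.log s = 1/(-Real.log s) by rw [div_neg, neg_div],
      le_div_iff₀ hz, le_div_iff₀ hL]
    rw [mul_comm]
  · rename_i hz
    push_neg at hz
    exact ⟨fun _ => le_trans hz hw.le, fun _ => hs0.le⟩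

lemma betaIntegrable_left {p q : ℝ} (hp : -1 < p) :
    IntervalIntegrable (fun t : ℝ => t ^ p * (1 - t) ^ q) volume 0 (1/2) := by
  apply (intervalIntegral.intervalIntegrable_rpow' hp).mul_continuousOn
  apply ContinuousOn.rpow_const (continuous_const.sub continuous_id).continuousOn
  intro t ht
  rw [uIcc_of_le (by norm_num : (0:ℝ) ≤ 1/2)] at ht
  left
  intro h
  rw [Pi.sub_apply, sub_eq_zero] at h
  simp only [id_eq] at h
  linarith [ht.2]

lemma betaIntegrable {p q : ℝ} (hp : -1 < p) (hq : -1 < q) :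
    IntervalIntegrable (fun t : ℝ => t ^ p * (1 - t) ^ q) volume 0 1 := by
  refine (betaIntegrable_left hp).trans ?_
  have h := ((betaIntegrable_left (p := q) (q := p) hq).comp_sub_left 1).symm
  simp only [sub_sub_cancel] at h
  norm_num at h
  have e : (fun x : ℝ => x ^ p * (1 - x) ^ q) = fun x : ℝ => (1 - x) ^ q * x ^ p := by
    funext x; exact mul_comm _ _
  rw [e]
  exact h

lemma Beta_eq_complex {x y : ℝ} (hx : 0 < x) (hy : 0 < y) :
    Complex.betaIntegral x y = (Beta x y : ℂ) := by
  rw [Complex.betaIntegral, Beta, ← intervalIntegral.integral_ofReal]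
  apply intervalIntegral.integral_congr_ae
  apply Eventually.of_forall
  intro t ht
  rw [uIoc_of_le (by norm_num : (0:ℝ) ≤ 1)] at ht
  rw [Complex.ofReal_mul, Complex.ofReal_cpow ht.1.le,
    Complex.ofReal_cpow (by linarith [ht.2] : (0:ℝ) ≤ 1 - t)]
  push_cast
  ring

lemma Beta_mul_rec {x y : ℝ} (hx : 0 < x) (hy : 0 < y) :
    x * Beta x (y + 1) = y * Beta (x + 1) y := by
  have h := Complex.betaIntegral_recurrence (u := (x:ℂ)) (v := (y:ℂ)) (by simpa) (by simpa)
  rw [show ((x:ℂ) + 1) = ((x + 1 : ℝ) : ℂ) by push_cast; ring,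
    show ((y:ℂ) + 1) = ((y + 1 : ℝ) : ℂ) by push_cast; ring] at h
  rw [Beta_eq_complex hx (by linarith), Beta_eq_complex (by linarith) hy] at h
  exact_mod_cast h

lemma Beta_add {x y : ℝ} (hx : 0 < x) (hy : 0 < y) :
    Beta x y = Beta x (y + 1) + Beta (x + 1) y := by
  rw [Beta, Beta, Beta, show y + 1 - 1 = y by ring, show x + 1 - 1 = x by ring,
    ← intervalIntegral.integral_add (betaIntegrable (by linarith) (by linarith))
      (betaIntegrable (by linarith) (by linarith))]
  apply intervalIntegral.integral_congr_ae
  have h1 : ∀ᵐ t : ℝ ∂volume, t ≠ 1 := by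
    rw [ae_iff]
    have : {a : ℝ | ¬a ≠ 1} = {1} := by ext t; simp
    rw [this]
    exact Real.volume_singleton
  filter_upwards [h1] with t ht1 ht
  rw [uIoc_of_le (by norm_num : (0:ℝ) ≤ 1)] at ht
  have h1t : 1 - t ≠ 0 := sub_ne_zero.2 (Ne.symm ht1)
  have e1 : (1 - t) ^ y = (1 - t) ^ (y - 1) * (1 - t) := by
    rw [← Real.rpow_add_one h1t (y - 1)]; norm_num
  have e2 : t ^ x = t ^ (x - 1) * t := by
    rw [← Real.rpow_add_one ht.1.ne' (x - 1)]; norm_num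
  rw [e1, e2]
  ring

lemma Beta_rec {x y : ℝ} (hx : 0 < x) (hy : 0 < y) :
    Beta x (y + 1) = y / (x + y) * Beta x y := by
  have h1 := Beta_add hx hy
  have h2 := Beta_mul_rec hx hy
  have h3 : (x + y) * Beta x (y + 1) = y * Beta x y := by
    rw [h1]; nlinarith [h2]
  rw [div_mul_eq_mul_div, eq_div_iff (by positivity : x + y ≠ 0)]
  linarith [h3]

lemma ae_ne_vol (c : ℝ) : ∀ᵐ t : ℝ ∂volume, t ≠ c := by
  rw [ae_iff]
  have : {a : ℝ | ¬a ≠ c} = {c} := by ext t; simp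
  rw [this]
  exact Real.volume_singleton

lemma cont_one_sub_rpow {θ : ℝ} (hθ : 0 ≤ θ) : Continuous (fun s : ℝ => (1 - s) ^ θ) :=
  (continuous_const.sub continuous_id).rpow_const (fun _ => Or.inr hθ)

lemma J_eq {c d θ : ℝ} (hc : 0 < c) (hd : 0 < d) (hθ : 1 ≤ θ) :
    ∫ t in (0:ℝ)..1, t ^ c * (1 - t ^ d) ^ θ = (1/d) * Beta ((c+1)/d) (θ + 1) := by
  have hθ0 : (0:ℝ) ≤ θ := by linarith
  set e : ℝ := (c+1)/d - 1 with he
  have he1 : -1 < e := by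
    have : 0 < (c+1)/d := by positivity
    simp only [he]; linarith
  set g : ℝ → ℝ := fun s => (1/d) * (s ^ e * (1 - s) ^ θ) with hg
  set f : ℝ → ℝ := fun t => t ^ d with hf
  set f' : ℝ → ℝ := fun t => d * t ^ (d - 1) with hf'
  have heq : ∀ x : ℝ, 0 < x → f' x • g (f x) = x ^ c * (1 - x ^ d) ^ θ := by
    intro x hxpos
    simp only [hf', hg, hf, smul_eq_mul]
    rw [← Real.rpow_mul hxpos.le d e]
    have hxc : x ^ (d - 1) * x ^ (d * e) = x ^ c := by
      rw [← Real.rpow_add hxpos]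
      congr 1
      rw [he]
      field_simp
      ring
    rw [← hxc]
    field_simp
  have hgint : IntegrableOn g (Icc (0:ℝ) 1) := by
    have := (betaIntegrable (p := e) (q := θ) he1 (by linarith)).const_mul (1/d)
    rw [intervalIntegrable_iff_integrableOn_Icc_of_le (by norm_num)] at this
    exact this
  have key := intervalIntegral.integral_comp_smul_deriv''' (a := 0) (b := 1)
    (f := f) (f' := f') (g := g)
    (by exact (continuous_id.rpow_const (fun _ => Or.inr hd.le)).continuousOn)
    (by
      intro x hx
      norm_num at hx
      exact (Real.hasDerivAt_rpow_const (Or.inl hx.1.ne')).hasDerivWithinAt)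
    (by
      apply ContinuousOn.mono (s := Ioi (0:ℝ))
      · exact continuousOn_const.mul (ContinuousOn.mul
          (fun s hs => (Real.continuousAt_rpow_const s e (Or.inl (ne_of_gt hs))).continuousWithinAt)
          (cont_one_sub_rpow hθ0).continuousOn)
      · intro s hs
        obtain ⟨x, hx, rfl⟩ := hs
        norm_num at hx
        exact Real.rpow_pos_of_pos hx.1 d
    )
    (by
      apply hgint.mono_set
      intro s hs
      obtain ⟨x, hx, rfl⟩ := hs
      rw [uIcc_of_le (by norm_num : (0:ℝ) ≤ 1)] at hx
      exact ⟨Real.rpow_nonneg hx.1 d, Real.rpow_le_one hx.1 hx.2 hd.le⟩)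
    (by
      have hcont : Continuous (fun x : ℝ => x ^ c * (1 - x ^ d) ^ θ) := by
        apply Continuous.mul
        · exact continuous_id.rpow_const (fun _ => Or.inr hc.le)
        · exact (cont_one_sub_rpow hθ0).comp (continuous_id.rpow_const (fun _ => Or.inr hd.le))
      rw [uIcc_of_le (by norm_num : (0:ℝ) ≤ 1)]
      apply (hcont.integrableOn_Icc (a := 0) (b := 1)).congr
      rw [EventuallyEq, ae_restrict_iff' measurableSet_Icc]
      filter_upwards [ae_ne_vol 0] with x hx0 hx
      exact (heq x (lt_of_le_of_ne hx.1 (Ne.symm hx0))).symm)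
  have hf0 : f 0 = 0 := by simp [hf, Real.zero_rpow hd.ne']
  have hf1 : f 1 = 1 := by simp [hf]
  rw [hf0, hf1] at key
  calc ∫ t in (0:ℝ)..1, t ^ c * (1 - t ^ d) ^ θ
      = ∫ x in (0:ℝ)..1, f' x • (g ∘ f) x := by
        apply intervalIntegral.integral_congr_ae
        filter_upwards [ae_ne_vol 0] with x hx0 hx
        rw [uIoc_of_le (by norm_num : (0:ℝ) ≤ 1)] at hx
        exact (heq x hx.1).symm
    _ = ∫ u in (0:ℝ)..1, g u := key
    _ = (1/d) * Beta ((c+1)/d) (θ + 1) := by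
        simp only [hg]
        rw [intervalIntegral.integral_const_mul]
        congr 1
        rw [Beta, he]
        norm_num

lemma integral_layercake {Ω : Type*} [MeasurableSpace Ω] (μ : Measure Ω) [IsProbabilityMeasure μ]
    {W : Ω → ℝ} (hWm : Measurable W) (hW0 : ∀ ω, 0 ≤ W ω) (hW1 : ∀ ω, W ω < 1)
    {ψ : ℝ → ℝ} (hψ : ∀ t ∈ Ioo (0:ℝ) 1, (μ {ω | t < W ω}).toReal = ψ t) :
    ∫ ω, W ω ∂μ = ∫ t in (0:ℝ)..1, ψ t := by
  have hint : Integrable W μ := by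
    refine ⟨hWm.aestronglyMeasurable, ?_⟩
    apply HasFiniteIntegral.of_bounded (C := 1)
    apply Eventually.of_forall
    intro ω
    rw [Real.norm_eq_abs, abs_of_nonneg (hW0 ω)]
    exact (hW1 ω).le
  rw [hint.integral_eq_integral_meas_lt (Eventually.of_forall hW0)]
  simp only [measureReal_def]
  set φ : ℝ → ℝ := fun t => (μ {a | t < W a}).toReal with hφ
  have hanti : Antitone φ := by
    intro t1 t2 h
    exact ENNReal.toReal_mono (measure_ne_top μ _)
      (measure_mono (fun ω hω => lt_of_le_of_lt h hω))
  have hzero : ∀ t ∈ Ioi (1:ℝ), φ t = 0 := by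
    intro t ht
    have : {a | t < W a} = (∅ : Set Ω) := by
      ext ω; simp only [mem_setOf_eq, mem_empty_iff_false, iff_false, not_lt]
      exact (hW1 ω).le.trans (le_of_lt ht)
    simp [hφ, this]
  have hsplit : Ioi (0:ℝ) = Ioc 0 1 ∪ Ioi 1 := (Ioc_union_Ioi_eq_Ioi (by norm_num)).symm
  rw [hsplit, setIntegral_union (Ioc_disjoint_Ioi le_rfl) measurableSet_Ioi
    ((hanti.intervalIntegrable (a := 0) (b := 1)).1)
    (IntegrableOn.congr_fun (integrableOn_zero) (fun t ht => (hzero t ht).symm) measurableSet_Ioi)]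
  rw [setIntegral_congr_fun measurableSet_Ioi hzero]
  simp only [integral_zero, add_zero]
  rw [intervalIntegral.integral_of_le (by norm_num : (0:ℝ) ≤ 1)]
  apply setIntegral_congr_ae measurableSet_Ioc
  filter_upwards [ae_ne_vol 1] with t ht1 ht
  exact hψ t ⟨ht.1, lt_of_le_of_ne ht.2 ht1⟩

lemma int_one_sub_rpow {r : ℝ} (hr : 0 < r) :
    ∫ t in (0:ℝ)..1, (1 - t ^ r) = 1 - 1/(r+1) := by
  rw [intervalIntegral.integral_sub intervalIntegrable_const
    (intervalIntegral.intervalIntegrable_rpow' (by linarith))]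
  rw [integral_rpow (Or.inl (by linarith))]
  simp [Real.zero_rpow (by linarith : r + 1 ≠ 0)]

lemma int_main {cc dd θ : ℝ} (hc : 0 < cc) (hd : 0 < dd) (hθ : 1 ≤ θ) :
    ∫ t in (0:ℝ)..1, (1 - t ^ cc * (2 * t ^ dd - 1 + (1 - t ^ dd) ^ θ))
      = 1 - 2/(cc+dd+1) + 1/(cc+1) - (1/dd) * Beta ((cc+1)/dd) (θ+1) := by
  have hcont : Continuous (fun t : ℝ => t ^ cc * (1 - t ^ dd) ^ θ) := by
    apply Continuous.mul
    · exact continuous_id.rpow_const (fun _ => Or.inr hc.le)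
    · exact (cont_one_sub_rpow (by linarith)).comp
        (continuous_id.rpow_const (fun _ => Or.inr hd.le))
  have h1 : ∫ t in (0:ℝ)..1, (1 - t ^ cc * (2 * t ^ dd - 1 + (1 - t ^ dd) ^ θ))
      = ∫ t in (0:ℝ)..1, (1 - 2 * t ^ (cc+dd) + t ^ cc - t ^ cc * (1 - t ^ dd) ^ θ) := by
    apply intervalIntegral.integral_congr_ae
    filter_upwards [ae_ne_vol 0] with t ht0 ht
    rw [uIoc_of_le (by norm_num : (0:ℝ) ≤ 1)] at ht
    rw [Real.rpow_add ht.1 cc dd]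
    ring
  rw [h1]
  have ia : IntervalIntegrable (fun _ : ℝ => (1:ℝ)) volume 0 1 := intervalIntegrable_const
  have ib : IntervalIntegrable (fun t : ℝ => 2 * t ^ (cc+dd)) volume 0 1 :=
    (intervalIntegral.intervalIntegrable_rpow' (by linarith)).const_mul 2
  have ic : IntervalIntegrable (fun t : ℝ => t ^ cc) volume 0 1 :=
    intervalIntegral.intervalIntegrable_rpow' (by linarith)
  have idd : IntervalIntegrable (fun t : ℝ => t ^ cc * (1 - t ^ dd) ^ θ) volume 0 1 :=
    hcont.intervalIntegrable 0 1
  rw [intervalIntegral.integral_sub ((ia.sub ib).add ic) idd,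
    intervalIntegral.integral_add (ia.sub ib) ic,
    intervalIntegral.integral_sub ia ib,
    intervalIntegral.integral_const_mul,
    integral_rpow (Or.inl (by linarith : (-1:ℝ) < cc + dd)),
    integral_rpow (Or.inl (by linarith : (-1:ℝ) < cc)),
    J_eq hc hd hθ]
  simp [Real.zero_rpow (by linarith : cc + dd + 1 ≠ 0),
    Real.zero_rpow (by linarith : cc + 1 ≠ 0)]
  ring

lemma pow_le_iff {lam : ℝ} (hlam : 0 < lam) {t : ℝ} (ht : t ∈ Set.Ioo (0:ℝ) 1) (z : ℝ) :
    frechetCDF z ^ lam ≤ t ↔ z ≤ -1 / Real.log (t ^ (1/lam)) := by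
  have hs0 : (0:ℝ) < t ^ (1/lam) := Real.rpow_pos_of_pos ht.1 _
  have hs1 : t ^ (1/lam) < 1 := Real.rpow_lt_one ht.1.le ht.2 (by positivity)
  rw [← frechetCDF_le_iff hs0 hs1 z]
  nth_rewrite 1 [show t = (t ^ (1/lam)) ^ lam by
    rw [one_div, Real.rpow_inv_rpow ht.1.le hlam.ne']]
  exact Real.rpow_le_rpow_iff (frechetCDF_nonneg z) hs0.le hlam

lemma meas_gt_marginal {Ω : Type*} [MeasurableSpace Ω] (μ : Measure Ω) [IsProbabilityMeasure μ]
    {Z : Ω → ℝ} (hZ : Measurable Z)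
    (hm : ∀ z : ℝ, (μ {ω | Z ω ≤ z}).toReal = frechetCDF z)
    {lam : ℝ} (hlam : 0 < lam) {t : ℝ} (ht : t ∈ Set.Ioo (0:ℝ) 1) :
    (μ {ω | t < frechetCDF (Z ω) ^ lam}).toReal = 1 - t ^ (1/lam) := by
  have hs0 : (0:ℝ) < t ^ (1/lam) := Real.rpow_pos_of_pos ht.1 _
  have hs1 : t ^ (1/lam) < 1 := Real.rpow_lt_one ht.1.le ht.2 (by positivity)
  have hset : {ω | t < frechetCDF (Z ω) ^ lam}
      = {ω | Z ω ≤ -1 / Real.log (t ^ (1/lam))}ᶜ := by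
    ext ω
    simp only [Set.mem_setOf_eq, Set.mem_compl_iff, ← pow_le_iff hlam ht, not_le]
  rw [hset, measure_compl (measurableSet_le hZ measurable_const) (measure_ne_top μ _), measure_univ,
    ENNReal.toReal_sub_of_le prob_le_one ENNReal.one_ne_top, ENNReal.toReal_one,
    hm _, frechetCDF_eval hs0 hs1]

lemma meas_gt_joint {Ω : Type*} [MeasurableSpace Ω] (μ : Measure Ω) [IsProbabilityMeasure μ]
    {Z₁ Z₂ : Ω → ℝ} (hZ₁ : Measurable Z₁) (hZ₂ : Measurable Z₂)
    {a θX θY lam : ℝ} (hlam : 0 < lam)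
    (hjoint : ∀ z : ℝ, 0 < z → (μ {ω | Z₁ ω ≤ z ∧ Z₂ ω ≤ z}).toReal =
      Real.exp (-(a * θX) / z) *
        (2 * Real.exp (-(1 - a) / z) - 1 + (1 - Real.exp (-(1 - a) / z)) ^ θY))
    {t : ℝ} (ht : t ∈ Set.Ioo (0:ℝ) 1) :
    (μ {ω | t < max (frechetCDF (Z₁ ω) ^ lam) (frechetCDF (Z₂ ω) ^ lam)}).toReal =
      1 - t ^ (a * θX / lam) *
        (2 * t ^ ((1 - a)/lam) - 1 + (1 - t ^ ((1 - a)/lam)) ^ θY) := by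
  have hs0 : (0:ℝ) < t ^ (1/lam) := Real.rpow_pos_of_pos ht.1 _
  have hs1 : t ^ (1/lam) < 1 := Real.rpow_lt_one ht.1.le ht.2 (by positivity)
  set w := -1 / Real.log (t ^ (1/lam)) with hw
  have hwpos : 0 < w := w_pos hs0 hs1
  have hset : {ω | t < max (frechetCDF (Z₁ ω) ^ lam) (frechetCDF (Z₂ ω) ^ lam)}
      = {ω | Z₁ ω ≤ w ∧ Z₂ ω ≤ w}ᶜ := by
    ext ω
    simp only [Set.mem_setOf_eq, Set.mem_compl_iff, hw, ← pow_le_iff hlam ht, not_and_or, not_le,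
      lt_max_iff]
  have hmeas : MeasurableSet {ω | Z₁ ω ≤ w ∧ Z₂ ω ≤ w} :=
    (hZ₁ measurableSet_Iic).inter (hZ₂ measurableSet_Iic)
  have hle : μ {ω | Z₁ ω ≤ w ∧ Z₂ ω ≤ w} ≤ 1 := prob_le_one
  have hexp : ∀ c : ℝ, Real.exp (-c / w) = t ^ (c / lam) := by
    intro c
    have hlog : Real.log (t ^ (1/lam)) ≠ 0 := (Real.log_neg hs0 hs1).ne
    rw [show -c / w = c * Real.log (t ^ (1/lam)) by rw [hw]; field_simp]
    rw [mul_comm, ← Real.rpow_def_of_pos hs0, ← Real.rpow_mul ht.1.le]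
    congr 1
    ring
  rw [hset, measure_compl hmeas (measure_ne_top μ _), measure_univ,
    ENNReal.toReal_sub_of_le hle ENNReal.one_ne_top, ENNReal.toReal_one,
    hjoint w hwpos, hexp (a * θX), hexp (1 - a)]

set_option maxHeartbeats 1000000 in
/-- The F^λ-madogram of a max-mixture pair with mixing coefficient `a` and extremal
coefficients `θX`, `θY`. -/
theorem f_lambda_madogram_max_mixture
    {Ω : Type*} [MeasurableSpace Ω] (μ : Measure Ω) [IsProbabilityMeasure μ]
    (Z₁ Z₂ : Ω → ℝ) (hZ₁ : Measurable Z₁) (hZ₂ : Measurable Z₂)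
    (a θX θY lam : ℝ)
    (ha : a ∈ Set.Ioo (0:ℝ) 1) (hθX : θX ∈ Set.Icc (1:ℝ) 2) (hθY : θY ∈ Set.Icc (1:ℝ) 2)
    (hlam : 0 < lam)
    (hm1 : ∀ z : ℝ, (μ {ω | Z₁ ω ≤ z}).toReal = frechetCDF z)
    (hm2 : ∀ z : ℝ, (μ {ω | Z₂ ω ≤ z}).toReal = frechetCDF z)
    (hjoint : ∀ z : ℝ, 0 < z → (μ {ω | Z₁ ω ≤ z ∧ Z₂ ω ≤ z}).toReal =
      Real.exp (-(a * θX) / z) *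
        (2 * Real.exp (-(1 - a) / z) - 1 + (1 - Real.exp (-(1 - a) / z)) ^ θY)) :
    (1/2) * ∫ ω, |frechetCDF (Z₁ ω) ^ lam - frechetCDF (Z₂ ω) ^ lam| ∂μ =
      lam / (1 + lam) - 2 * lam / (a * (θX - 1) + 1 + lam) + lam / (a * θX + lam)
        - (lam * θY / ((1 - a) * θY + a * θX + lam)) *
            Beta ((a * θX + lam) / (1 - a)) θY := by
  obtain ⟨ha0, ha1⟩ := ha
  obtain ⟨hθX1, _⟩ := hθX
  obtain ⟨hθY1, _⟩ := hθY
  have hθXpos : (0:ℝ) < θX := by linarith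
  set U : Ω → ℝ := fun ω => frechetCDF (Z₁ ω) ^ lam with hU
  set V : Ω → ℝ := fun ω => frechetCDF (Z₂ ω) ^ lam with hV
  have hrpc : Continuous (fun x : ℝ => x ^ lam) :=
    continuous_id.rpow_const (fun _ => Or.inr hlam.le)
  have hUm : Measurable U := hrpc.measurable.comp (frechetCDF_mono.measurable.comp hZ₁)
  have hVm : Measurable V := hrpc.measurable.comp (frechetCDF_mono.measurable.comp hZ₂)
  have hU0 : ∀ ω, 0 ≤ U ω := fun ω => Real.rpow_nonneg (frechetCDF_nonneg _) _
  have hV0 : ∀ ω, 0 ≤ V ω := fun ω => Real.rpow_nonneg (frechetCDF_nonneg _) _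
  have hU1 : ∀ ω, U ω < 1 :=
    fun ω => Real.rpow_lt_one (frechetCDF_nonneg _) (frechetCDF_lt_one _) hlam
  have hV1 : ∀ ω, V ω < 1 :=
    fun ω => Real.rpow_lt_one (frechetCDF_nonneg _) (frechetCDF_lt_one _) hlam
  have hbd : ∀ {W : Ω → ℝ}, Measurable W → (∀ ω, 0 ≤ W ω) → (∀ ω, W ω < 1) →
      Integrable W μ := by
    intro W hm h0 h1
    refine ⟨hm.aestronglyMeasurable, ?_⟩
    apply HasFiniteIntegral.of_bounded (C := 1)
    apply Eventually.of_forall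
    intro ω
    rw [Real.norm_eq_abs, abs_of_nonneg (h0 ω)]
    exact (h1 ω).le
  have hUint : Integrable U μ := hbd hUm hU0 hU1
  have hVint : Integrable V μ := hbd hVm hV0 hV1
  have hMm : Measurable (fun ω => max (U ω) (V ω)) := hUm.max hVm
  have hMint : Integrable (fun ω => max (U ω) (V ω)) μ :=
    hbd hMm (fun ω => (hU0 ω).trans (le_max_left _ _)) (fun ω => max_lt (hU1 ω) (hV1 ω))
  -- step 1 : |U - V| = 2 max - U - V
  have habs : ∫ ω, |U ω - V ω| ∂μ
      = 2 * (∫ ω, max (U ω) (V ω) ∂μ) - (∫ ω, U ω ∂μ) - ∫ ω, V ω ∂μ := by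
    have hfun : ∀ ω, |U ω - V ω| = 2 * max (U ω) (V ω) - U ω - V ω := by
      intro ω
      rcases le_total (U ω) (V ω) with h | h
      · rw [max_eq_right h, abs_of_nonpos (by linarith)]; ring
      · rw [max_eq_left h, abs_of_nonneg (by linarith)]; ring
    have h1 : Integrable (fun ω => 2 * max (U ω) (V ω) - U ω) μ :=
      (hMint.const_mul 2).sub hUint
    rw [integral_congr_ae (Eventually.of_forall hfun),
      integral_sub h1 hVint,
      integral_sub (hMint.const_mul 2) hUint, integral_const_mul]
  -- step 2: expectations
  have hEU : ∫ ω, U ω ∂μ = 1 - 1/(1/lam + 1) := by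
    rw [integral_layercake μ hUm hU0 hU1
      (fun t ht => meas_gt_marginal μ hZ₁ hm1 hlam ht)]
    exact int_one_sub_rpow (by positivity)
  have hEV : ∫ ω, V ω ∂μ = 1 - 1/(1/lam + 1) := by
    rw [integral_layercake μ hVm hV0 hV1
      (fun t ht => meas_gt_marginal μ hZ₂ hm2 hlam ht)]
    exact int_one_sub_rpow (by positivity)
  set cc : ℝ := a * θX / lam with hcc
  set dd : ℝ := (1 - a) / lam with hdd
  have hccpos : 0 < cc := div_pos (mul_pos ha0 hθXpos) hlam
  have hddpos : 0 < dd := div_pos (by linarith) hlam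
  have hEM : ∫ ω, max (U ω) (V ω) ∂μ
      = 1 - 2/(cc+dd+1) + 1/(cc+1) - (1/dd) * Beta ((cc+1)/dd) (θY+1) := by
    rw [integral_layercake μ hMm
      (fun ω => (hU0 ω).trans (le_max_left _ _)) (fun ω => max_lt (hU1 ω) (hV1 ω))
      (fun t ht => meas_gt_joint μ hZ₁ hZ₂ hlam hjoint ht)]
    exact int_main hccpos hddpos hθY1
  -- step 3: Beta recurrence and ratio rewrite
  have hxval : (cc+1)/dd = (a * θX + lam) / (1 - a) := by
    rw [hcc, hdd]
    field_simp
  have hxpos : 0 < (cc+1)/dd := div_pos (by linarith) hddpos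
  have hrec : Beta ((cc+1)/dd) (θY+1) = θY / ((cc+1)/dd + θY) * Beta ((cc+1)/dd) θY :=
    Beta_rec hxpos (by linarith)
  rw [habs, hEU, hEV, hEM, hrec, hxval]
  have h2 : a * (θX - 1) + 1 + lam ≠ 0 := by nlinarith
  have h4 : (1 - a) * θY + a * θX + lam ≠ 0 := by nlinarith
  have hfrac : 0 < (a * θX + lam) / (1 - a) := div_pos (by nlinarith) (by linarith)
  have h6 : (a * θX + lam) / (1 - a) + θY ≠ 0 := by linarith
  have hlam' : lam ≠ 0 := hlam.ne'
  have hl1 : 1 + lam ≠ 0 := by linarith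
  have h3 : a * θX + lam ≠ 0 := by nlinarith
  have h5 : (1:ℝ) - a ≠ 0 := by linarith
  have h8 : 1/lam + 1 ≠ 0 := by positivity
  set B : ℝ := Beta ((a * θX + lam) / (1 - a)) θY with hB
  have e1 : 1/(1/lam + 1) = lam/(1 + lam) := by
    field_simp
  have e2 : 2/(cc + dd + 1) = 2*lam/(a*(θX - 1) + 1 + lam) := by
    rw [hcc, hdd]
    rw [div_eq_div_iff (by positivity) (by
      have : 0 < a * (θX - 1) + 1 + lam := by nlinarith
      linarith)]
    field_simp
    ring
  have e3 : 1/(cc + 1) = lam/(a*θX + lam) := by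
    rw [hcc, div_eq_div_iff (by positivity) (by nlinarith)]
    field_simp
  have c4 : 1/dd * (θY/((a*θX + lam)/(1 - a) + θY)) = lam*θY/((1 - a)*θY + a*θX + lam) := by
    rw [hdd, div_mul_div_comm, one_mul, div_eq_div_iff (by positivity) (by nlinarith)]
    field_simp
    ring
  have e4 : 1/dd * (θY/((a*θX + lam)/(1 - a) + θY) * B)
      = lam*θY/((1 - a)*θY + a*θX + lam) * B := by
    rw [← mul_assoc, c4]
  rw [e1, e2, e3, e4]
  ring
end

section
/- Let (Z₁, Z₂) be a max-mixture pair with mixing coefficient a ∈ (0,1) and extremal coefficients θ_X, θ_Y ∈ [1,2], let λ > 0, and set W = max(F(Z₁)^λ, F(Z₂)^λ). Then for every u ∈ (0,1), P(W ≤ u) = 2·u^{(a(θ_X−1)+1)/λ} − u^{aθ_X/λ} + u^{aθ_X/λ}·(1 − u^{(1−a)/λ})^{θ_Y}. -/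
open MeasureTheory Real Filter

/-- Distribution function of `W = max(F(Z₁)^λ, F(Z₂)^λ)` for a max-mixture pair. -/
theorem cdf_max_F_lambda_max_mixture
    {Ω : Type*} [MeasurableSpace Ω] (μ : Measure Ω) [IsProbabilityMeasure μ]
    (Z₁ Z₂ : Ω → ℝ) (hZ₁ : Measurable Z₁) (hZ₂ : Measurable Z₂)
    (a θX θY lam : ℝ)
    (ha : a ∈ Set.Ioo (0:ℝ) 1) (hθX : θX ∈ Set.Icc (1:ℝ) 2) (hθY : θY ∈ Set.Icc (1:ℝ) 2)
    (hlam : 0 < lam)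
    (hm1 : ∀ z : ℝ, (μ {ω | Z₁ ω ≤ z}).toReal = frechetCDF z)
    (hm2 : ∀ z : ℝ, (μ {ω | Z₂ ω ≤ z}).toReal = frechetCDF z)
    (hjoint : ∀ z : ℝ, 0 < z → (μ {ω | Z₁ ω ≤ z ∧ Z₂ ω ≤ z}).toReal =
      Real.exp (-(a * θX) / z) *
        (2 * Real.exp (-(1 - a) / z) - 1 + (1 - Real.exp (-(1 - a) / z)) ^ θY)) :
    ∀ u ∈ Set.Ioo (0:ℝ) 1,
      (μ {ω | max (frechetCDF (Z₁ ω) ^ lam) (frechetCDF (Z₂ ω) ^ lam) ≤ u}).toReal =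
        2 * u ^ ((a * (θX - 1) + 1) / lam) - u ^ (a * θX / lam)
          + u ^ (a * θX / lam) * (1 - u ^ ((1 - a) / lam)) ^ θY := by
  rintro u ⟨hu0, hu1⟩
  have hlogu : Real.log u < 0 := Real.log_neg hu0 hu1
  set z₀ : ℝ := lam / (-Real.log u) with hz₀
  have hz₀pos : 0 < z₀ := div_pos hlam (by linarith)
  have hkey : ∀ z : ℝ, frechetCDF z ^ lam ≤ u ↔ z ≤ z₀ := by
    intro z
    unfold frechetCDF
    split_ifs with hz
    · rw [← Real.exp_log hu0, Real.rpow_def_of_pos (Real.exp_pos _),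
        Real.log_exp, Real.exp_le_exp, hz₀, le_div_iff₀ (by linarith),
        div_mul_eq_mul_div, div_le_iff₀ hz]
      constructor <;> intro h <;> nlinarith
    · rw [Real.zero_rpow hlam.ne']
      simp only [hu0.le, true_iff]
      linarith [not_lt.mp hz, hz₀pos]
  have hset : {ω | max (frechetCDF (Z₁ ω) ^ lam) (frechetCDF (Z₂ ω) ^ lam) ≤ u}
      = {ω | Z₁ ω ≤ z₀ ∧ Z₂ ω ≤ z₀} := by
    ext ω; simp [max_le_iff, hkey]
  rw [hset, hjoint z₀ hz₀pos]
  have hexp : ∀ c : ℝ, Real.exp (-c / z₀) = u ^ (c / lam) := by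
    intro c
    rw [Real.rpow_def_of_pos hu0]
    congr 1
    rw [hz₀]
    field_simp
  rw [hexp (a * θX), hexp (1 - a)]
  have e3 : u ^ (a * θX / lam) * u ^ ((1 - a) / lam)
      = u ^ ((a * (θX - 1) + 1) / lam) := by
    rw [← Real.rpow_add hu0]; congr 1; ring
  rw [← e3]; ring
end

section
/- Let (Z₁, Z₂) be a max-mixture pair with mixing coefficient a ∈ (0,1) and extremal coefficients θ_X, θ_Y ∈ [1,2]. Then, as z → ∞, P(Z₁ > z, Z₂ > z) = a(2−θ_X)/z + ((1−a)/z)^{θ_Y} + O(z^{−2}); that is, the function z ↦ P(Z₁ > z, Z₂ > z) − a(2−θ_X)/z − ((1−a)/z)^{θ_Y} is O(z^{−2}) as z → ∞. -/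
open MeasureTheory Real Filter

/-- `exp (-x) ≥ 1 - x`. -/
lemma aux_exp_neg_lb (x : ℝ) : 1 - x ≤ Real.exp (-x) := by
  have := Real.add_one_le_exp (-x); linarith

/-- `exp (-x) ≤ 1 - x + x ^ 2` for `x ≥ 0`. -/
lemma aux_exp_neg_ub {x : ℝ} (hx : 0 ≤ x) : Real.exp (-x) ≤ 1 - x + x ^ 2 := by
  have h1 : x + 1 ≤ Real.exp x := Real.add_one_le_exp x
  have h2 : Real.exp (-x) * Real.exp x = 1 := by rw [← Real.exp_add]; simp
  have h3 : (0:ℝ) < Real.exp (-x) := Real.exp_pos _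
  nlinarith [sq_nonneg x, mul_nonneg hx (mul_nonneg hx hx), Real.exp_pos x]

/-- `x ^ θ - y ^ θ ≤ θ (x - y)` for `0 ≤ y ≤ x ≤ 1` and `θ ≥ 1`. -/
lemma aux_rpow_sub_rpow_le {x y θ : ℝ} (hy : 0 ≤ y) (hyx : y ≤ x) (hx1 : x ≤ 1)
    (hθ : 1 ≤ θ) : x ^ θ - y ^ θ ≤ θ * (x - y) := by
  rcases eq_or_lt_of_le (hy.trans hyx) with h | hx0
  · have hx0 : x = 0 := h.symm
    have hy0 : y = 0 := le_antisymm (hx0 ▸ hyx) hy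
    rw [hx0, hy0, Real.zero_rpow (by linarith : θ ≠ 0)]
    simp
  · have hθ0 : (0:ℝ) ≤ θ := by linarith
    have hs : (-1:ℝ) ≤ y / x - 1 := by
      have : 0 ≤ y / x := div_nonneg hy hx0.le
      linarith
    have hB := one_add_mul_self_le_rpow_one_add hs hθ
    rw [add_sub_cancel] at hB
    have hdiv : (y / x) ^ θ = y ^ θ / x ^ θ := Real.div_rpow hy hx0.le θ
    rw [hdiv] at hB
    have hxθ : (0:ℝ) < x ^ θ := Real.rpow_pos_of_pos hx0 _
    have h1 : (1 + θ * (y / x - 1)) * x ^ θ ≤ y ^ θ := by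
      rw [← le_div_iff₀ hxθ]; exact hB
    have hxθ1 : x ^ θ ≤ x := by
      calc x ^ θ ≤ x ^ (1:ℝ) := Real.rpow_le_rpow_of_exponent_ge hx0 hx1 hθ
        _ = x := Real.rpow_one x
    have hfrac : 0 ≤ 1 - y / x := by
      rw [sub_nonneg, div_le_one hx0]; exact hyx
    have step1 : x ^ θ - y ^ θ ≤ θ * (1 - y / x) * x ^ θ := by nlinarith [h1]
    have step2 : θ * (1 - y / x) * x ^ θ ≤ θ * (1 - y / x) * x :=
      mul_le_mul_of_nonneg_left hxθ1 (mul_nonneg hθ0 hfrac)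
    have step3 : θ * (1 - y / x) * x = θ * (x - y) := by field_simp
    linarith

set_option maxHeartbeats 800000 in
/-- The core analytic estimate, with `p = a θX`, `b = 1 - a`, `θ = θY`, `u = 1/z`. -/
lemma aux_key {p b θ u : ℝ} (hp0 : 0 ≤ p) (hp2 : p ≤ 2) (hb0 : 0 < b) (hb1 : b ≤ 1)
    (hθ1 : 1 ≤ θ) (hθ2 : θ ≤ 2) (hu0 : 0 < u) (hu1 : u ≤ 1) :
    |1 - 2 * Real.exp (-u) + Real.exp (-(p * u)) *
        (2 * Real.exp (-(b * u)) - 1 + (1 - Real.exp (-(b * u))) ^ θ)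
      - (2 - 2 * (p + b) + p) * u - (b * u) ^ θ| ≤ 30 * u ^ 2 := by
  set e1 := Real.exp (-u) with he1
  set ep := Real.exp (-(p * u)) with hep
  set eb := Real.exp (-(b * u)) with heb
  set ec := Real.exp (-((p + b) * u)) with hec
  set W := (1 - eb) ^ θ with hW
  have hpe : ep * eb = ec := by rw [hep, heb, hec, ← Real.exp_add]; congr 1; ring
  have hbuu : b * u ≤ u := by
    calc b * u ≤ 1 * u := mul_le_mul_of_nonneg_right hb1 hu0.le
      _ = u := one_mul u
  have hbu0 : 0 < b * u := mul_pos hb0 hu0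
  have hbu1 : b * u ≤ 1 := hbuu.trans hu1
  have hpu0 : 0 ≤ p * u := mul_nonneg hp0 hu0.le
  have hpu2 : p * u ≤ 2 * u := mul_le_mul_of_nonneg_right hp2 hu0.le
  have hcu0 : 0 ≤ (p + b) * u := by positivity
  have hcu3 : (p + b) * u ≤ 3 * u := mul_le_mul_of_nonneg_right (by linarith) hu0.le
  -- bounds on exponentials
  have h1l : 1 - u ≤ e1 := aux_exp_neg_lb u
  have h1u : e1 ≤ 1 - u + u ^ 2 := aux_exp_neg_ub hu0.le
  have hpl : 1 - p * u ≤ ep := aux_exp_neg_lb _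
  have hpu : ep ≤ 1 - p * u + (p * u) ^ 2 := aux_exp_neg_ub hpu0
  have hcl : 1 - (p + b) * u ≤ ec := aux_exp_neg_lb _
  have hcu : ec ≤ 1 - (p + b) * u + ((p + b) * u) ^ 2 := aux_exp_neg_ub hcu0
  have hbl : 1 - b * u ≤ eb := aux_exp_neg_lb _
  have hbu : eb ≤ 1 - b * u + (b * u) ^ 2 := aux_exp_neg_ub hbu0.le
  have heb1 : eb ≤ 1 := by
    rw [heb]; exact Real.exp_le_one_iff.mpr (by linarith)
  have hep1 : ep ≤ 1 := by
    rw [hep]; exact Real.exp_le_one_iff.mpr (by linarith)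
  -- squares of small quantities
  have hpsq : (p * u) ^ 2 ≤ 4 * u ^ 2 := by
    have := pow_le_pow_left₀ hpu0 hpu2 2
    have h4 : (2 * u) ^ 2 = 4 * u ^ 2 := by ring
    linarith
  have hcsq : ((p + b) * u) ^ 2 ≤ 9 * u ^ 2 := by
    have := pow_le_pow_left₀ hcu0 hcu3 2
    have h9 : (3 * u) ^ 2 = 9 * u ^ 2 := by ring
    linarith
  have hbsq : (b * u) ^ 2 ≤ u ^ 2 := by
    have := pow_le_pow_left₀ hbu0.le hbuu 2
    linarith
  -- bounds on W
  have hW0 : 0 ≤ W := Real.rpow_nonneg (by linarith) _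
  have hWle : W ≤ (b * u) ^ θ :=
    Real.rpow_le_rpow (by linarith) (by linarith) (by linarith)
  have hbθ : (b * u) ^ θ ≤ b * u := by
    calc (b * u) ^ θ ≤ (b * u) ^ (1:ℝ) :=
          Real.rpow_le_rpow_of_exponent_ge hbu0 hbu1 hθ1
      _ = b * u := Real.rpow_one _
  have hWu : W ≤ u := by linarith
  -- C bound
  have hC : (b * u) ^ θ - W ≤ θ * ((b * u) - (1 - eb)) :=
    aux_rpow_sub_rpow_le (by linarith) (by linarith) hbu1 hθ1
  have hd0 : 0 ≤ b * u - (1 - eb) := by linarith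
  have hd : b * u - (1 - eb) ≤ u ^ 2 := by linarith
  have hθd : θ * (b * u - (1 - eb)) ≤ 2 * (b * u - (1 - eb)) :=
    mul_le_mul_of_nonneg_right hθ2 hd0
  have hC2 : (b * u) ^ θ - W ≤ 2 * u ^ 2 := by linarith
  have hC0 : 0 ≤ (b * u) ^ θ - W := by linarith
  -- B bound
  have hB2 : (1 - ep) * W ≤ 2 * u ^ 2 := by
    have h1 : (1 - ep) * W ≤ (2 * u) * W :=
      mul_le_mul_of_nonneg_right (by linarith) hW0
    have h2 : (2 * u) * W ≤ (2 * u) * u :=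
      mul_le_mul_of_nonneg_left hWu (by positivity)
    have h3 : (2 * u) * u = 2 * u ^ 2 := by ring
    linarith
  have hB0 : 0 ≤ (1 - ep) * W := mul_nonneg (by linarith) hW0
  -- decomposition
  have hident : 1 - 2 * e1 + ep * (2 * eb - 1 + W) - (2 - 2 * (p + b) + p) * u - (b * u) ^ θ
      = (-2 * (e1 - 1 + u) + 2 * (ec - 1 + (p + b) * u) - (ep - 1 + p * u))
        + ((ep - 1) * W) + (W - (b * u) ^ θ) := by
    have h2 : ep * (2 * eb - 1 + W) = 2 * ec - ep + ep * W := by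
      rw [← hpe]; ring
    rw [h2]; ring
  rw [hident]
  have hsqu : 0 ≤ u ^ 2 := sq_nonneg u
  have ha1u : e1 - 1 + u ≤ u ^ 2 := by linarith
  have ha1l : -(u ^ 2) ≤ e1 - 1 + u := by linarith
  have hapu : ep - 1 + p * u ≤ 4 * u ^ 2 := by linarith
  have hapl : -(4 * u ^ 2) ≤ ep - 1 + p * u := by linarith
  have hacu : ec - 1 + (p + b) * u ≤ 9 * u ^ 2 := by linarith
  have hacl : -(9 * u ^ 2) ≤ ec - 1 + (p + b) * u := by linarith
  rw [abs_le]
  constructor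
  · linarith
  · linarith

/-- Inclusion–exclusion for the joint survivor function. -/
lemma aux_survivor_eq {Ω : Type*} [MeasurableSpace Ω] (μ : Measure Ω) [IsProbabilityMeasure μ]
    (Z₁ Z₂ : Ω → ℝ) (hZ₁ : Measurable Z₁) (hZ₂ : Measurable Z₂) (z : ℝ) :
    (μ {ω | z < Z₁ ω ∧ z < Z₂ ω}).toReal =
      1 - (μ {ω | Z₁ ω ≤ z}).toReal - (μ {ω | Z₂ ω ≤ z}).toReal
        + (μ {ω | Z₁ ω ≤ z ∧ Z₂ ω ≤ z}).toReal := by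
  have hA : MeasurableSet {ω | Z₁ ω ≤ z} := measurableSet_le hZ₁ measurable_const
  have hB : MeasurableSet {ω | Z₂ ω ≤ z} := measurableSet_le hZ₂ measurable_const
  have hcompl : {ω | z < Z₁ ω ∧ z < Z₂ ω} = ({ω | Z₁ ω ≤ z} ∪ {ω | Z₂ ω ≤ z})ᶜ := by
    ext ω; simp [not_or, not_le]
  have hinter : {ω | Z₁ ω ≤ z ∧ Z₂ ω ≤ z} = {ω | Z₁ ω ≤ z} ∩ {ω | Z₂ ω ≤ z} := rfl
  have h1 : μ ({ω | Z₁ ω ≤ z} ∪ {ω | Z₂ ω ≤ z}) + μ ({ω | Z₁ ω ≤ z} ∩ {ω | Z₂ ω ≤ z})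
      = μ {ω | Z₁ ω ≤ z} + μ {ω | Z₂ ω ≤ z} := measure_union_add_inter _ hB
  have h2 : μ ({ω | Z₁ ω ≤ z} ∪ {ω | Z₂ ω ≤ z}) + μ (({ω | Z₁ ω ≤ z} ∪ {ω | Z₂ ω ≤ z})ᶜ) = 1 := by
    rw [measure_add_measure_compl (hA.union hB), measure_univ]
  have h1' : (μ ({ω | Z₁ ω ≤ z} ∪ {ω | Z₂ ω ≤ z})).toReal
        + (μ ({ω | Z₁ ω ≤ z} ∩ {ω | Z₂ ω ≤ z})).toReal
      = (μ {ω | Z₁ ω ≤ z}).toReal + (μ {ω | Z₂ ω ≤ z}).toReal := by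
    rw [← ENNReal.toReal_add (measure_ne_top μ _) (measure_ne_top μ _),
      ← ENNReal.toReal_add (measure_ne_top μ _) (measure_ne_top μ _), h1]
  have h2' : (μ ({ω | Z₁ ω ≤ z} ∪ {ω | Z₂ ω ≤ z})).toReal
      + (μ (({ω | Z₁ ω ≤ z} ∪ {ω | Z₂ ω ≤ z})ᶜ)).toReal = 1 := by
    rw [← ENNReal.toReal_add (measure_ne_top μ _) (measure_ne_top μ _), h2, ENNReal.toReal_one]
  rw [hcompl, hinter]
  linarith

/-- Joint tail expansion of a max-mixture pair:
`P(Z₁ > z, Z₂ > z) = a(2-θX)/z + ((1-a)/z)^{θY} + O(z⁻²)` as `z → ∞`. -/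
theorem joint_survivor_expansion_max_mixture
    {Ω : Type*} [MeasurableSpace Ω] (μ : Measure Ω) [IsProbabilityMeasure μ]
    (Z₁ Z₂ : Ω → ℝ) (hZ₁ : Measurable Z₁) (hZ₂ : Measurable Z₂)
    (a θX θY : ℝ)
    (ha : a ∈ Set.Ioo (0:ℝ) 1) (hθX : θX ∈ Set.Icc (1:ℝ) 2) (hθY : θY ∈ Set.Icc (1:ℝ) 2)
    (hm1 : ∀ z : ℝ, (μ {ω | Z₁ ω ≤ z}).toReal = frechetCDF z)
    (hm2 : ∀ z : ℝ, (μ {ω | Z₂ ω ≤ z}).toReal = frechetCDF z)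
    (hjoint : ∀ z : ℝ, 0 < z → (μ {ω | Z₁ ω ≤ z ∧ Z₂ ω ≤ z}).toReal =
      Real.exp (-(a * θX) / z) *
        (2 * Real.exp (-(1 - a) / z) - 1 + (1 - Real.exp (-(1 - a) / z)) ^ θY)) :
    (fun z : ℝ => (μ {ω | z < Z₁ ω ∧ z < Z₂ ω}).toReal
        - a * (2 - θX) / z - ((1 - a) / z) ^ θY)
      =O[atTop] fun z : ℝ => z ^ (-(2:ℝ)) := by
  obtain ⟨ha0, ha1⟩ := ha
  obtain ⟨hX1, hX2⟩ := hθX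
  obtain ⟨hY1, hY2⟩ := hθY
  rw [Asymptotics.isBigO_iff]
  refine ⟨30, ?_⟩
  filter_upwards [eventually_ge_atTop (1:ℝ)] with z hz1
  have hz0 : (0:ℝ) < z := lt_of_lt_of_le one_pos hz1
  have hu0 : (0:ℝ) < 1 / z := by positivity
  have hu1 : 1 / z ≤ 1 := by
    rw [div_le_one hz0]; exact hz1
  have hF : frechetCDF z = Real.exp (-(1 / z)) := by
    rw [frechetCDF, if_pos hz0, neg_div]
  have hkey := aux_key (p := a * θX) (b := 1 - a) (θ := θY) (u := 1 / z)
    (by positivity) (by nlinarith) (by linarith) (by linarith) hY1 hY2 hu0 hu1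
  have hsurv := aux_survivor_eq μ Z₁ Z₂ hZ₁ hZ₂ z
  have hexpr : (μ {ω | z < Z₁ ω ∧ z < Z₂ ω}).toReal - a * (2 - θX) / z - ((1 - a) / z) ^ θY
      = 1 - 2 * Real.exp (-(1 / z)) + Real.exp (-(a * θX * (1 / z))) *
          (2 * Real.exp (-((1 - a) * (1 / z))) - 1 + (1 - Real.exp (-((1 - a) * (1 / z)))) ^ θY)
        - (2 - 2 * (a * θX + (1 - a)) + a * θX) * (1 / z) - ((1 - a) * (1 / z)) ^ θY := by
    rw [hsurv, hm1, hm2, hF, hjoint z hz0]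
    rw [show -(a * θX) / z = -(a * θX * (1 / z)) by ring,
      show -(1 - a) / z = -((1 - a) * (1 / z)) by ring,
      show (1 - a) / z = (1 - a) * (1 / z) by ring]
    ring
  have hnorm : ‖z ^ (-(2:ℝ))‖ = (1 / z) ^ 2 := by
    rw [Real.norm_eq_abs, abs_of_pos (Real.rpow_pos_of_pos hz0 _),
      show (-(2:ℝ)) = ((-2 : ℤ) : ℝ) by norm_num, Real.rpow_intCast]
    rw [show ((-2:ℤ)) = -((2:ℕ):ℤ) by norm_num, zpow_neg, zpow_natCast, one_div, inv_pow]
  rw [Real.norm_eq_abs, hexpr, hnorm]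
  exact hkey
end

section
/- Let (Z₁, Z₂) be a max-mixture pair with mixing coefficient a ∈ (0,1) and extremal coefficients θ_X ∈ [1,2] and θ_Y ∈ (1,2]. Then the upper tail dependence coefficient of the pair equals a·(2−θ_X): namely, lim_{z→∞} P(Z₁ > z, Z₂ > z)/P(Z₂ > z) = a(2−θ_X). -/
open MeasureTheory Real Filter

-- aux lemma: (1 - exp(-c t))/t → c as t → 0+
lemma lim_one_sub_exp (c : ℝ) :
    Tendsto (fun t : ℝ => (1 - Real.exp (-c * t)) / t) (nhdsWithin 0 (Set.Ioi 0)) (nhds c) := by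
  have h1 : HasDerivAt (fun t : ℝ => -c * t) (-c) 0 := by
    simpa using (hasDerivAt_id (0:ℝ)).const_mul (-c)
  have h2 : HasDerivAt (fun t : ℝ => Real.exp (-c * t)) (-c) 0 := by
    simpa using h1.exp
  have h3 : HasDerivAt (fun t : ℝ => 1 - Real.exp (-c * t)) c 0 := by
    simpa using h2.const_sub 1
  have h4 := hasDerivAt_iff_tendsto_slope.mp h3
  have h5 : Tendsto (slope (fun t : ℝ => 1 - Real.exp (-c * t)) 0)
      (nhdsWithin 0 (Set.Ioi 0)) (nhds c) :=
    h4.mono_left (nhdsWithin_mono _ (fun x hx => ne_of_gt hx))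
  refine h5.congr (fun t => ?_)
  simp [slope_def_field]


lemma lim_rpow_term {b θ : ℝ} (hb : 0 < b) (hθ : 1 < θ) :
    Tendsto (fun t : ℝ => (1 - Real.exp (-b * t)) ^ θ / t)
      (nhdsWithin 0 (Set.Ioi 0)) (nhds 0) := by
  have hmain : Tendsto (fun t : ℝ =>
      ((1 - Real.exp (-b * t)) / t) ^ θ * t ^ (θ - 1))
      (nhdsWithin 0 (Set.Ioi 0)) (nhds 0) := by
    have h1 : Tendsto (fun t : ℝ => ((1 - Real.exp (-b * t)) / t) ^ θ)
        (nhdsWithin 0 (Set.Ioi 0)) (nhds (b ^ θ)) := by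
      have hc : ContinuousAt (fun x : ℝ => x ^ θ) b :=
        Real.continuousAt_rpow_const b θ (Or.inl (ne_of_gt hb))
      exact hc.tendsto.comp (lim_one_sub_exp b)
    have h2 : Tendsto (fun t : ℝ => t ^ (θ - 1)) (nhdsWithin 0 (Set.Ioi 0)) (nhds 0) := by
      have hc : ContinuousAt (fun x : ℝ => x ^ (θ - 1)) 0 :=
        Real.continuousAt_rpow_const 0 (θ - 1) (Or.inr (by linarith))
      have h := hc.tendsto.mono_left (nhdsWithin_le_nhds (s := Set.Ioi (0:ℝ)))
      simpa [Real.zero_rpow (by intro h; linarith [h] : θ - 1 ≠ 0)] using h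
    simpa using h1.mul h2
  refine hmain.congr' ?_
  filter_upwards [self_mem_nhdsWithin] with t ht
  have ht0 : (0:ℝ) < t := ht
  have hu : 0 ≤ 1 - Real.exp (-b * t) := by
    have : Real.exp (-b * t) ≤ 1 := by
      rw [Real.exp_le_one_iff]
      nlinarith
    linarith
  rw [Real.div_rpow hu ht0.le, Real.rpow_sub ht0, Real.rpow_one]
  have h1 : t ^ θ ≠ 0 := ne_of_gt (Real.rpow_pos_of_pos ht0 θ)
  field_simp

theorem chi_max_mixture'
    {Ω : Type*} [MeasurableSpace Ω] (μ : Measure Ω) [IsProbabilityMeasure μ]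
    (Z₁ Z₂ : Ω → ℝ) (hZ₁ : Measurable Z₁) (hZ₂ : Measurable Z₂)
    (a θX θY : ℝ)
    (ha : a ∈ Set.Ioo (0:ℝ) 1) (hθX : θX ∈ Set.Icc (1:ℝ) 2) (hθY : θY ∈ Set.Ioc (1:ℝ) 2)
    (hm1 : ∀ z : ℝ, (μ {ω | Z₁ ω ≤ z}).toReal = if 0 < z then Real.exp (-1 / z) else 0)
    (hm2 : ∀ z : ℝ, (μ {ω | Z₂ ω ≤ z}).toReal = if 0 < z then Real.exp (-1 / z) else 0)
    (hjoint : ∀ z : ℝ, 0 < z → (μ {ω | Z₁ ω ≤ z ∧ Z₂ ω ≤ z}).toReal =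
      Real.exp (-(a * θX) / z) *
        (2 * Real.exp (-(1 - a) / z) - 1 + (1 - Real.exp (-(1 - a) / z)) ^ θY)) :
    Tendsto (fun z : ℝ =>
        (μ {ω | z < Z₁ ω ∧ z < Z₂ ω}).toReal / (μ {ω | z < Z₂ ω}).toReal)
      atTop (nhds (a * (2 - θX))) := by
  obtain ⟨ha0, ha1⟩ := ha
  obtain ⟨hX1, hX2⟩ := hθX
  obtain ⟨hY1, hY2⟩ := hθY
  -- the model functions of t = 1/z
  set c : ℝ := a * θX with hc
  set b : ℝ := 1 + a * (θX - 1) with hb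
  set num : ℝ → ℝ := fun t =>
    ((1 - Real.exp (-c * t)) - 2 * (1 - Real.exp (-b * t)) + 2 * (1 - Real.exp (-1 * t)))
      + Real.exp (-c * t) * (1 - Real.exp (-(1 - a) * t)) ^ θY with hnumdef
  set den : ℝ → ℝ := fun t => 1 - Real.exp (-1 * t) with hdendef
  -- limit of num t / t
  have hnum : Tendsto (fun t : ℝ => num t / t) (nhdsWithin 0 (Set.Ioi 0))
      (nhds (a * (2 - θX))) := by
    have hexp : Tendsto (fun t : ℝ => Real.exp (-c * t)) (nhdsWithin 0 (Set.Ioi 0))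
        (nhds 1) := by
      have : ContinuousAt (fun t : ℝ => Real.exp (-c * t)) 0 := by fun_prop
      simpa using this.tendsto.mono_left (nhdsWithin_le_nhds)
    have H : Tendsto (fun t : ℝ =>
        ((1 - Real.exp (-c * t)) / t - 2 * ((1 - Real.exp (-b * t)) / t)
          + 2 * ((1 - Real.exp (-1 * t)) / t))
        + Real.exp (-c * t) * ((1 - Real.exp (-(1 - a) * t)) ^ θY / t))
        (nhdsWithin 0 (Set.Ioi 0)) (nhds ((c - 2 * b + 2 * 1) + 1 * 0)) := by
      exact (((lim_one_sub_exp c).sub ((lim_one_sub_exp b).const_mul 2)).add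
        ((lim_one_sub_exp 1).const_mul 2)).add
        (hexp.mul (lim_rpow_term (by linarith) hY1))
    have heq : (c - 2 * b + 2 * 1) + 1 * 0 = a * (2 - θX) := by
      rw [hc, hb]; ring
    rw [heq] at H
    refine H.congr (fun t => ?_)
    rw [hnumdef]
    ring
  have hden : Tendsto (fun t : ℝ => den t / t) (nhdsWithin 0 (Set.Ioi 0)) (nhds 1) :=
    lim_one_sub_exp 1
  -- ratio limit in t
  have hratio : Tendsto (fun t : ℝ => num t / den t) (nhdsWithin 0 (Set.Ioi 0))
      (nhds (a * (2 - θX))) := by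
    have := hnum.div hden (one_ne_zero)
    rw [div_one] at this
    refine this.congr' ?_
    filter_upwards [self_mem_nhdsWithin] with t ht
    have ht0 : (0:ℝ) < t := ht
    show (num t / t) / (den t / t) = num t / den t
    rw [div_div_div_cancel_right₀]
    exact ne_of_gt ht0
  -- compose with z ↦ z⁻¹
  have hinv : Tendsto (fun z : ℝ => z⁻¹) atTop (nhdsWithin 0 (Set.Ioi 0)) := by
    refine tendsto_nhdsWithin_of_tendsto_nhds_of_eventually_within _
      tendsto_inv_atTop_zero ?_
    filter_upwards [eventually_gt_atTop (0:ℝ)] with z hz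
    exact inv_pos.mpr hz
  have hcomp : Tendsto (fun z : ℝ => num z⁻¹ / den z⁻¹) atTop (nhds (a * (2 - θX))) :=
    hratio.comp hinv
  -- eventual equality with the measure ratio
  refine hcomp.congr' ?_
  filter_upwards [eventually_gt_atTop (0:ℝ)] with z hz
  have hA : MeasurableSet {ω | Z₁ ω ≤ z} := hZ₁ measurableSet_Iic
  have hB : MeasurableSet {ω | Z₂ ω ≤ z} := hZ₂ measurableSet_Iic
  have hfin : ∀ s : Set Ω, μ s ≠ ⊤ := fun s => measure_ne_top μ s
  -- complement formulas
  have hBc : {ω | z < Z₂ ω} = {ω | Z₂ ω ≤ z}ᶜ := by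
    ext ω; simp [not_le]
  have hABc : {ω | z < Z₁ ω ∧ z < Z₂ ω} = ({ω | Z₁ ω ≤ z} ∪ {ω | Z₂ ω ≤ z})ᶜ := by
    ext ω; simp [not_or, not_le]
  have hcompl : ∀ s : Set Ω, MeasurableSet s → (μ sᶜ).toReal = 1 - (μ s).toReal := by
    intro s hs
    rw [measure_compl hs (hfin s), ENNReal.toReal_sub_of_le (measure_mono (Set.subset_univ s))
      (hfin _)]
    simp
  have hunion : (μ ({ω | Z₁ ω ≤ z} ∪ {ω | Z₂ ω ≤ z})).toReal
      = (μ {ω | Z₁ ω ≤ z}).toReal + (μ {ω | Z₂ ω ≤ z}).toReal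
        - (μ ({ω | Z₁ ω ≤ z} ∩ {ω | Z₂ ω ≤ z})).toReal := by
    have h := measure_union_add_inter (μ := μ) {ω | Z₁ ω ≤ z} hB
    have h2 := congrArg ENNReal.toReal h
    rw [ENNReal.toReal_add (hfin _) (hfin _), ENNReal.toReal_add (hfin _) (hfin _)] at h2
    linarith
  have hinter : {ω | Z₁ ω ≤ z} ∩ {ω | Z₂ ω ≤ z} = {ω | Z₁ ω ≤ z ∧ Z₂ ω ≤ z} := rfl
  have hF1 : (μ {ω | Z₁ ω ≤ z}).toReal = Real.exp (-1 / z) := by rw [hm1]; simp [hz]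
  have hF2 : (μ {ω | Z₂ ω ≤ z}).toReal = Real.exp (-1 / z) := by rw [hm2]; simp [hz]
  have hNum : (μ {ω | z < Z₁ ω ∧ z < Z₂ ω}).toReal = num z⁻¹ := by
    rw [hABc, hcompl _ (hA.union hB), hunion, hinter, hF1, hF2, hjoint z hz, hnumdef]
    have e1 : -(a * θX) / z = -c * z⁻¹ := by rw [hc]; ring
    have e2 : -(1 - a) / z = -(1 - a) * z⁻¹ := by ring
    have e3 : -1 / z = -1 * z⁻¹ := by ring
    rw [e1, e2, e3]
    have e4 : Real.exp (-c * z⁻¹) * Real.exp (-(1 - a) * z⁻¹)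
        = Real.exp (-b * z⁻¹) := by
      rw [← Real.exp_add]
      congr 1
      rw [hc, hb]; ring
    nlinarith [e4, Real.exp_pos (-c * z⁻¹)]
  have hDen : (μ {ω | z < Z₂ ω}).toReal = den z⁻¹ := by
    rw [hBc, hcompl _ hB, hF2, hdendef]
    have e3 : -1 / z = -1 * z⁻¹ := by ring
    rw [e3]
  rw [hNum, hDen]

/-- The upper tail dependence coefficient of a max-mixture pair equals `a(2-θX)`. -/
theorem chi_max_mixture
    {Ω : Type*} [MeasurableSpace Ω] (μ : Measure Ω) [IsProbabilityMeasure μ]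
    (Z₁ Z₂ : Ω → ℝ) (hZ₁ : Measurable Z₁) (hZ₂ : Measurable Z₂)
    (a θX θY : ℝ)
    (ha : a ∈ Set.Ioo (0:ℝ) 1) (hθX : θX ∈ Set.Icc (1:ℝ) 2) (hθY : θY ∈ Set.Ioc (1:ℝ) 2)
    (hm1 : ∀ z : ℝ, (μ {ω | Z₁ ω ≤ z}).toReal = frechetCDF z)
    (hm2 : ∀ z : ℝ, (μ {ω | Z₂ ω ≤ z}).toReal = frechetCDF z)
    (hjoint : ∀ z : ℝ, 0 < z → (μ {ω | Z₁ ω ≤ z ∧ Z₂ ω ≤ z}).toReal =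
      Real.exp (-(a * θX) / z) *
        (2 * Real.exp (-(1 - a) / z) - 1 + (1 - Real.exp (-(1 - a) / z)) ^ θY)) :
    Tendsto (fun z : ℝ =>
        (μ {ω | z < Z₁ ω ∧ z < Z₂ ω}).toReal / (μ {ω | z < Z₂ ω}).toReal)
      atTop (nhds (a * (2 - θX))) := by
  refine chi_max_mixture' μ Z₁ Z₂ hZ₁ hZ₂ a θX θY ha hθX hθY ?_ ?_ hjoint
  · intro z; simpa [frechetCDF] using hm1 z
  · intro z; simpa [frechetCDF] using hm2 z
end

section
/- Let (Y₁, Y₂) be an inverted max-stable pair with extremal coefficient θ_Y ∈ [1,2]. Then for every z > 0, P(Y₁ > z, Y₂ > z) = (1 − exp(−1/z))^{θ_Y}, and consequently lim_{z→∞} z^{θ_Y}·P(Y₁ > z, Y₂ > z) = 1; that is, the pair satisfies the Ledford–Tawn joint tail model P(Y₁ > z, Y₂ > z) ~ z^{−1/η} with tail dependence coefficient η = 1/θ_Y and slowly varying function identically 1. -/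
open MeasureTheory Real Filter

lemma aux_tendsto : Tendsto (fun z : ℝ => z * (1 - Real.exp (-1 / z))) atTop (nhds 1) := by
  have hd : HasDerivAt (fun t : ℝ => 1 - Real.exp (-t)) 1 0 := by
    have h := ((Real.hasDerivAt_exp (-(0:ℝ))).comp 0 (hasDerivAt_neg 0)).const_sub 1
    simpa using h
  have hslope := hasDerivAt_iff_tendsto_slope.mp hd
  have h1 : Tendsto (fun z : ℝ => 1 / z) atTop (nhdsWithin 0 {(0:ℝ)}ᶜ) := by
    rw [tendsto_nhdsWithin_iff]
    constructor
    · simpa [one_div] using tendsto_inv_atTop_zero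
    · filter_upwards [eventually_gt_atTop (0:ℝ)] with z hz
      exact ne_of_gt (by positivity)
  have hcomp := hslope.comp h1
  refine hcomp.congr (fun z => ?_)
  simp only [Function.comp, slope_def_field]
  simp [neg_div]
  ring

/-- For an inverted max-stable pair, `P(Y₁ > z, Y₂ > z) = (1 - exp(-1/z))^{θY}` and
`z^{θY}·P(Y₁ > z, Y₂ > z) → 1` as `z → ∞`, i.e. the Ledford–Tawn tail model holds with
`η = 1/θY` and slowly varying function identically `1`. -/
theorem ledford_tawn_inverted_max_stable
    {Ω : Type*} [MeasurableSpace Ω] (μ : Measure Ω) [IsProbabilityMeasure μ]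
    (Y₁ Y₂ : Ω → ℝ) (hY₁ : Measurable Y₁) (hY₂ : Measurable Y₂)
    (θY : ℝ) (hθY : θY ∈ Set.Icc (1:ℝ) 2)
    (hm1 : ∀ z : ℝ, (μ {ω | Y₁ ω ≤ z}).toReal = frechetCDF z)
    (hm2 : ∀ z : ℝ, (μ {ω | Y₂ ω ≤ z}).toReal = frechetCDF z)
    (hjoint : ∀ z : ℝ, 0 < z → (μ {ω | Y₁ ω ≤ z ∧ Y₂ ω ≤ z}).toReal =
      -1 + 2 * Real.exp (-1 / z) + (1 - Real.exp (-1 / z)) ^ θY) :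
    (∀ z : ℝ, 0 < z →
        (μ {ω | z < Y₁ ω ∧ z < Y₂ ω}).toReal = (1 - Real.exp (-1 / z)) ^ θY) ∧
      Tendsto (fun z : ℝ => z ^ θY * (μ {ω | z < Y₁ ω ∧ z < Y₂ ω}).toReal)
        atTop (nhds 1) := by
  have key : ∀ z : ℝ, 0 < z →
      (μ {ω | z < Y₁ ω ∧ z < Y₂ ω}).toReal = (1 - Real.exp (-1 / z)) ^ θY := by
    intro z hz
    set A : Set Ω := {ω | Y₁ ω ≤ z} with hAdef
    set B : Set Ω := {ω | Y₂ ω ≤ z} with hBdef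
    have hA : MeasurableSet A := hY₁ measurableSet_Iic
    have hB : MeasurableSet B := hY₂ measurableSet_Iic
    have hset : {ω | z < Y₁ ω ∧ z < Y₂ ω} = (A ∪ B)ᶜ := by
      ext ω; simp [hAdef, hBdef, not_or, not_le]
    have hui : μ (A ∪ B) + μ (A ∩ B) = μ A + μ B := measure_union_add_inter A hB
    have hui' : (μ (A ∪ B)).toReal + (μ (A ∩ B)).toReal
        = (μ A).toReal + (μ B).toReal := by
      rw [← ENNReal.toReal_add (measure_ne_top μ _) (measure_ne_top μ _),
        ← ENNReal.toReal_add (measure_ne_top μ _) (measure_ne_top μ _), hui]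
    have hcompl : (μ (A ∪ B)ᶜ).toReal = 1 - (μ (A ∪ B)).toReal := by
      rw [measure_compl (hA.union hB) (measure_ne_top μ _), measure_univ,
        ENNReal.toReal_sub_of_le prob_le_one (by simp), ENNReal.toReal_one]
    have hAB : A ∩ B = {ω | Y₁ ω ≤ z ∧ Y₂ ω ≤ z} := rfl
    have ha : (μ A).toReal = Real.exp (-1 / z) := by rw [hm1 z, frechetCDF, if_pos hz]
    have hb : (μ B).toReal = Real.exp (-1 / z) := by rw [hm2 z, frechetCDF, if_pos hz]
    have hc : (μ (A ∩ B)).toReal = -1 + 2 * Real.exp (-1 / z)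
        + (1 - Real.exp (-1 / z)) ^ θY := by rw [hAB]; exact hjoint z hz
    rw [hset, hcompl]
    rw [ha, hb, hc] at hui'
    linarith
  refine ⟨key, ?_⟩
  have h1 : Tendsto (fun z : ℝ => (z * (1 - Real.exp (-1 / z))) ^ θY) atTop (nhds 1) := by
    have := aux_tendsto.rpow_const (p := θY) (Or.inr (le_trans zero_le_one hθY.1))
    simpa using this
  refine h1.congr' ?_
  filter_upwards [eventually_gt_atTop (0:ℝ)] with z hz
  have he : Real.exp (-1 / z) ≤ 1 := Real.exp_le_one_iff.mpr (by
    rw [neg_div]; exact neg_nonpos.mpr (by positivity))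
  rw [Real.mul_rpow hz.le (by linarith), key z hz]
end

section
/- Let (X₁, X₂) be a max-stable pair with extremal coefficient θ_X ∈ [1,2] and (Y₁, Y₂) an inverted max-stable pair with extremal coefficient θ_Y ∈ [1,2], with the random vector (X₁, X₂) independent of the random vector (Y₁, Y₂). Let a ∈ (0,1) and Z_i = max(aX_i, (1−a)Y_i) for i = 1,2. Then for every z > 0, P(Z₁ ≤ z, Z₂ ≤ z) = exp(−aθ_X/z)·(−1 + 2·exp(−(1−a)/z) + (1 − exp(−(1−a)/z))^{θ_Y}). -/
open MeasureTheory ProbabilityTheory Real Filter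

/-- Bivariate distribution function of the max-mixture of a max-stable pair and an
independent inverted max-stable pair. -/
theorem max_mixture_bivariate_cdf
    {Ω : Type*} [MeasurableSpace Ω] (μ : Measure Ω) [IsProbabilityMeasure μ]
    (X₁ X₂ Y₁ Y₂ : Ω → ℝ)
    (hX₁ : Measurable X₁) (hX₂ : Measurable X₂)
    (hY₁ : Measurable Y₁) (hY₂ : Measurable Y₂)
    (θX θY : ℝ) (hθX : θX ∈ Set.Icc (1:ℝ) 2) (hθY : θY ∈ Set.Icc (1:ℝ) 2)
    (hindep : IndepFun (fun ω => (X₁ ω, X₂ ω)) (fun ω => (Y₁ ω, Y₂ ω)) μ)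
    (hmX₁ : ∀ z : ℝ, (μ {ω | X₁ ω ≤ z}).toReal = frechetCDF z)
    (hmX₂ : ∀ z : ℝ, (μ {ω | X₂ ω ≤ z}).toReal = frechetCDF z)
    (hmY₁ : ∀ z : ℝ, (μ {ω | Y₁ ω ≤ z}).toReal = frechetCDF z)
    (hmY₂ : ∀ z : ℝ, (μ {ω | Y₂ ω ≤ z}).toReal = frechetCDF z)
    (hjointX : ∀ x : ℝ, 0 < x →
      (μ {ω | X₁ ω ≤ x ∧ X₂ ω ≤ x}).toReal = Real.exp (-θX / x))
    (hjointY : ∀ y : ℝ, 0 < y → (μ {ω | Y₁ ω ≤ y ∧ Y₂ ω ≤ y}).toReal =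
      -1 + 2 * Real.exp (-1 / y) + (1 - Real.exp (-1 / y)) ^ θY)
    (a : ℝ) (ha : a ∈ Set.Ioo (0:ℝ) 1) :
    ∀ z : ℝ, 0 < z →
      (μ {ω | max (a * X₁ ω) ((1 - a) * Y₁ ω) ≤ z ∧
              max (a * X₂ ω) ((1 - a) * Y₂ ω) ≤ z}).toReal =
        Real.exp (-(a * θX) / z) *
          (-1 + 2 * Real.exp (-(1 - a) / z) + (1 - Real.exp (-(1 - a) / z)) ^ θY) := by
  intro z hz
  obtain ⟨ha0, ha1⟩ := ha
  have ha' : 0 < 1 - a := by linarith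
  set x := z / a with hxdef
  set y := z / (1 - a) with hydef
  have hx : 0 < x := div_pos hz ha0
  have hy : 0 < y := div_pos hz ha'
  have h1 : ∀ w : ℝ, a * w ≤ z ↔ w ≤ x := fun w => by
    rw [hxdef, le_div_iff₀ ha0, mul_comm]
  have h2 : ∀ w : ℝ, (1 - a) * w ≤ z ↔ w ≤ y := fun w => by
    rw [hydef, le_div_iff₀ ha', mul_comm]
  have hset : {ω | max (a * X₁ ω) ((1 - a) * Y₁ ω) ≤ z ∧
      max (a * X₂ ω) ((1 - a) * Y₂ ω) ≤ z}
      = (fun ω => (X₁ ω, X₂ ω)) ⁻¹' {p : ℝ × ℝ | p.1 ≤ x ∧ p.2 ≤ x}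
        ∩ (fun ω => (Y₁ ω, Y₂ ω)) ⁻¹' {p : ℝ × ℝ | p.1 ≤ y ∧ p.2 ≤ y} := by
    ext ω
    simp only [Set.mem_setOf_eq, Set.mem_inter_iff, Set.mem_preimage, max_le_iff,
      h1, h2]
    tauto
  have hms : MeasurableSet {p : ℝ × ℝ | p.1 ≤ x ∧ p.2 ≤ x} := by
    rw [Set.setOf_and]
    exact (measurableSet_le measurable_fst measurable_const).inter
      (measurableSet_le measurable_snd measurable_const)
  have hms' : MeasurableSet {p : ℝ × ℝ | p.1 ≤ y ∧ p.2 ≤ y} := by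
    rw [Set.setOf_and]
    exact (measurableSet_le measurable_fst measurable_const).inter
      (measurableSet_le measurable_snd measurable_const)
  rw [hset, hindep.measure_inter_preimage_eq_mul _ _ hms hms', ENNReal.toReal_mul]
  have e1 : (fun ω => (X₁ ω, X₂ ω)) ⁻¹' {p : ℝ × ℝ | p.1 ≤ x ∧ p.2 ≤ x}
      = {ω | X₁ ω ≤ x ∧ X₂ ω ≤ x} := rfl
  have e2 : (fun ω => (Y₁ ω, Y₂ ω)) ⁻¹' {p : ℝ × ℝ | p.1 ≤ y ∧ p.2 ≤ y}
      = {ω | Y₁ ω ≤ y ∧ Y₂ ω ≤ y} := rfl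
  rw [e1, e2, hjointX x hx, hjointY y hy]
  have hzne : z ≠ 0 := ne_of_gt hz
  have hane : a ≠ 0 := ne_of_gt ha0
  have hane' : (1 - a) ≠ 0 := ne_of_gt ha'
  have ex : -θX / x = -(a * θX) / z := by
    rw [hxdef, div_div_eq_mul_div]; ring
  have ey : -1 / y = -(1 - a) / z := by
    rw [hydef, div_div_eq_mul_div]; ring
  rw [ex, ey]
end
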